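/- arXiv:1704.00707 — 2 statements merged into one kernel-verified Lean document; each statement's English description precedes it below -/
import Mathlib

section
/- For all k ≥ 60 and all m with 5 ≤ m ≤ k(k-1)/4, if the sequence d_{k-1} is strictly increasing on [5, (k-1)k/4] and weakly unimodal on [0, (k-1)k/2] (increasing up to its middle), then d_k(m-1) < d_k(m), using the recursion d_k(m) = d_{k-1}(m) + d_{k-1}(m-k). -/
/-- `dd k m` is the number of partitions of `m` into distinct parts each at most `k`. -/
def dd (k m : ℕ) : ℕ :=
  Fintype.card {p : Nat.Partition m // p.parts.Nodup ∧ ∀ i ∈ p.parts, i ≤ k}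

/-! Removing the part `k + 1` gives `d_{k+1}(m) = d_k(m) + d_k(m - (k + 1))` for `k + 1 ≤ m`.
Hence if `d_k` increases strictly at `m` and weakly at `m - (k + 1)`, then so does `d_{k+1}`
at `m`; for `m ≤ k + 1` the second term only helps, since `d_k(m') = d_{k+1}(m')` for
`m' ≤ k`. -/

abbrev BoundedDistinctPartition (k m : ℕ) : Type :=
  {p : Nat.Partition m // p.parts.Nodup ∧ ∀ i ∈ p.parts, i ≤ k}

namespace BoundedDistinctPartition

lemma card_eq_dd (k m : ℕ) : Fintype.card (BoundedDistinctPartition k m) = dd k m := rfl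

def equivOfNotMem (k m : ℕ) :
    {p : BoundedDistinctPartition (k + 1) m // k + 1 ∉ p.1.parts} ≃
      BoundedDistinctPartition k m :=
  (Equiv.subtypeSubtypeEquivSubtypeInter
    (fun p : Nat.Partition m => p.parts.Nodup ∧ ∀ i ∈ p.parts, i ≤ k + 1)
    (fun p => k + 1 ∉ p.parts)).trans <| Equiv.subtypeEquivRight fun _ => by
    constructor
    · rintro ⟨⟨hnd, hle⟩, hk⟩
      exact ⟨hnd, fun i hi => Nat.le_of_lt_succ <| (hle i hi).lt_of_ne fun h => hk (h ▸ hi)⟩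
    · rintro ⟨hnd, hle⟩
      exact ⟨⟨hnd, fun i hi => (hle i hi).trans k.le_succ⟩,
        fun hk => absurd (hle _ hk) (by omega)⟩

def equivOfMem {k m : ℕ} (hkm : k + 1 ≤ m) :
    {p : BoundedDistinctPartition (k + 1) m // k + 1 ∈ p.1.parts} ≃
      BoundedDistinctPartition k (m - (k + 1)) where
  toFun p :=
    ⟨{ parts := p.1.1.parts.erase (k + 1)
       parts_pos := fun hi => p.1.1.parts_pos (Multiset.mem_of_mem_erase hi)
       parts_sum := by
         have := Multiset.sum_erase p.2
         have := p.1.1.parts_sum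
         omega },
     p.1.2.1.erase _, fun i hi => by
       obtain ⟨hik, hi⟩ := (p.1.2.1.mem_erase_iff).1 hi
       have := p.1.2.2 i hi
       omega⟩
  invFun q :=
    ⟨⟨{ parts := (k + 1) ::ₘ q.1.parts
        parts_pos := fun hi => by
          rcases Multiset.mem_cons.1 hi with rfl | hi
          exacts [k.succ_pos, q.1.parts_pos hi]
        parts_sum := by rw [Multiset.sum_cons, q.1.parts_sum]; omega },
      Multiset.nodup_cons.2 ⟨fun hk => absurd (q.2.2 _ hk) (by omega), q.2.1⟩, fun i hi => by
        rcases Multiset.mem_cons.1 hi with rfl | hi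
        exacts [le_rfl, (q.2.2 i hi).trans k.le_succ]⟩,
     Multiset.mem_cons_self _ _⟩
  left_inv p := Subtype.ext <| Subtype.ext <| Nat.Partition.ext <| Multiset.cons_erase p.2
  right_inv q := Subtype.ext <| Nat.Partition.ext <| Multiset.erase_cons_head _ _

end BoundedDistinctPartition

open BoundedDistinctPartition

lemma dd_mono_left {k l : ℕ} (m : ℕ) (hkl : k ≤ l) : dd k m ≤ dd l m :=
  Fintype.card_subtype_mono _ _ fun _ ⟨hnd, hle⟩ => ⟨hnd, fun i hi => (hle i hi).trans hkl⟩

lemma dd_eq_of_le {k l m : ℕ} (hk : m ≤ k) (hl : m ≤ l) : dd k m = dd l m :=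
  Fintype.card_congr <| Equiv.subtypeEquivRight fun _ =>
    and_congr_right fun _ => ⟨fun _ _ hi => (Nat.Partition.le_of_mem_parts hi).trans hl,
      fun _ _ hi => (Nat.Partition.le_of_mem_parts hi).trans hk⟩

theorem dd_succ {k m : ℕ} (hkm : k + 1 ≤ m) : dd (k + 1) m = dd k m + dd k (m - (k + 1)) := by
  classical
  rw [← card_eq_dd, ← Fintype.card_congr (Equiv.sumCompl fun p => k + 1 ∈ p.1.parts),
    Fintype.card_sum, add_comm, Fintype.card_congr (equivOfNotMem k m),
    Fintype.card_congr (equivOfMem hkm), card_eq_dd, card_eq_dd]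

theorem dd_succ_pred_lt {k m : ℕ} (hlt : dd k (m - 1) < dd k m)
    (hle : dd k (m - (k + 1) - 1) ≤ dd k (m - (k + 1))) :
    dd (k + 1) (m - 1) < dd (k + 1) m := by
  rcases le_or_gt m (k + 1) with hm | hm
  · calc dd (k + 1) (m - 1) = dd k (m - 1) := dd_eq_of_le (by omega) (by omega)
      _ < dd k m := hlt
      _ ≤ dd (k + 1) m := dd_mono_left m k.le_succ
  · rw [dd_succ hm.le, dd_succ (by omega : k + 1 ≤ m - 1), Nat.sub_right_comm]
    exact Nat.add_lt_add_of_lt_of_le hlt hle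

theorem saxl_stmt9_general (k : ℕ)
    (hstrict : ∀ m, 5 ≤ m → m ≤ (k - 1) * k / 4 → dd (k - 1) (m - 1) < dd (k - 1) m)
    (hunim₁ : ∀ m, 1 ≤ m → m ≤ (k - 1) * k / 4 → dd (k - 1) (m - 1) ≤ dd (k - 1) m) :
    ∀ m, 5 ≤ m → m ≤ k * (k - 1) / 4 → dd k (m - 1) < dd k m := by
  intro m hm5 hm
  rw [Nat.mul_comm] at hm
  obtain ⟨n, rfl⟩ : ∃ n, k = n + 1 := Nat.exists_eq_succ_of_ne_zero (by rintro rfl; omega)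
  simp only [Nat.add_sub_cancel] at hstrict hunim₁ hm
  refine dd_succ_pred_lt (hstrict m hm5 hm) ?_
  rcases Nat.eq_zero_or_pos (m - (n + 1)) with h0 | hpos
  · rw [h0]
  · exact hunim₁ _ hpos (by omega)

/-- Induction step for almost strict unimodality: for `k ≥ 60`, if `d_{k-1}` is
strictly increasing on `[5, (k-1)k/4]` and weakly unimodal (increasing up to the
middle `(k-1)k/4`, decreasing afterwards on `[0, (k-1)k/2]`), then
`d_k(m-1) < d_k(m)` for `5 ≤ m ≤ k(k-1)/4`. -/
theorem saxl_stmt9 (k : ℕ) (hk : 60 ≤ k)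
    (hstrict : ∀ m, 5 ≤ m → m ≤ (k - 1) * k / 4 → dd (k - 1) (m - 1) < dd (k - 1) m)
    (hunim₁ : ∀ m, 1 ≤ m → m ≤ (k - 1) * k / 4 → dd (k - 1) (m - 1) ≤ dd (k - 1) m)
    (hunim₂ : ∀ m, (k - 1) * k / 4 ≤ m → m < (k - 1) * k / 2 →
      dd (k - 1) (m + 1) ≤ dd (k - 1) m) :
    ∀ m, 5 ≤ m → m ≤ k * (k - 1) / 4 → dd k (m - 1) < dd k m :=
  saxl_stmt9_general k hstrict hunim₁
end

section
/- Let n = k(k+1)/2 and let ρ_k = (k, k-1, ..., 2, 1) be the staircase partition of n. For 1 ≤ j ≤ n/2, the value of the irreducible S_n-character [n-j, j] on permutations of cycle type ρ_k equals d_k(j) - d_k(j-1), where d_k(m) is the number of partitions of m into distinct parts each at most k. -/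
/-- The number of `σ`-invariant subsets of `{1,…,n}` of size `m`; by the
Littlewood–Richardson rule, `[n-j,j] = [n-j]∘[j] - [n-j+1]∘[j-1]`, and the outer
product `[n-m]∘[m]` is the permutation character on `m`-subsets, whose value at
`σ` is this count. -/
def invCount {n : ℕ} (σ : Equiv.Perm (Fin n)) (m : ℕ) : ℕ :=
  (Finset.univ.filter fun S : Finset (Fin n) => S.card = m ∧ S.image σ = S).card

open Finset

namespace Equiv.Perm

variable {α : Type*} [Fintype α] [DecidableEq α] {σ : Perm α} {x y : α}

def orbitCard (σ : Perm α) (x : α) : ℕ :=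
  #(univ.filter fun y => σ.SameCycle x y)

theorem SameCycle.orbitCard_eq (h : σ.SameCycle x y) : σ.orbitCard x = σ.orbitCard y := by
  unfold orbitCard
  congr 1
  ext z
  simp only [mem_filter, mem_univ, true_and]
  exact ⟨h.symm.trans, h.trans⟩

theorem orbitCard_apply (σ : Perm α) (x : α) : σ.orbitCard (σ x) = σ.orbitCard x :=
  (sameCycle_apply_right.mpr (SameCycle.refl σ x)).orbitCard_eq.symm

theorem orbitCard_of_mem_support (hx : x ∈ σ.support) :
    σ.orbitCard x = #(σ.cycleOf x).support := by
  unfold orbitCard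
  congr 1
  ext y
  simp only [mem_filter, mem_univ, true_and, mem_support_cycleOf_iff, hx, and_true]

theorem orbitCard_of_notMem_support (hx : x ∉ σ.support) : σ.orbitCard x = 1 := by
  unfold orbitCard
  rw [card_eq_one]
  refine ⟨x, ?_⟩
  ext y
  simp only [mem_filter, mem_univ, true_and, mem_singleton]
  exact ⟨fun h => (h.eq_of_left (notMem_support.mp hx)).symm, fun h => h ▸ SameCycle.refl σ x⟩

theorem card_support_cycleOf_mem_cycleType (hx : x ∈ σ.support) :
    #(σ.cycleOf x).support ∈ σ.cycleType := by
  rw [cycleType_def]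
  exact Multiset.mem_map_of_mem _ (cycleOf_mem_cycleFactorsFinset_iff.mpr hx)

theorem orbitCard_mem_parts_partition (σ : Perm α) (x : α) :
    σ.orbitCard x ∈ σ.partition.parts := by
  rw [parts_partition, Multiset.mem_add]
  by_cases hx : x ∈ σ.support
  · exact .inl (orbitCard_of_mem_support hx ▸ card_support_cycleOf_mem_cycleType hx)
  · refine .inr (Multiset.mem_replicate.mpr ⟨?_, orbitCard_of_notMem_support hx⟩)
    rw [← card_compl]
    exact card_ne_zero_of_mem (mem_compl.mpr hx)

theorem exists_orbitCard_eq {i : ℕ} (hi : i ∈ σ.partition.parts) : ∃ x, σ.orbitCard x = i := by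
  rw [parts_partition, Multiset.mem_add] at hi
  rcases hi with hi | hi
  · obtain ⟨c, hc, rfl⟩ := Multiset.mem_map.mp (cycleType_def σ ▸ hi)
    obtain ⟨x, hx⟩ := (mem_cycleFactorsFinset_iff.mp hc).1.nonempty_support
    have hcx : c = σ.cycleOf x := cycle_is_cycleOf hx hc
    refine ⟨x, ?_⟩
    rw [orbitCard_of_mem_support (mem_cycleFactorsFinset_support_le hc hx), ← hcx]
    rfl
  · obtain ⟨hne, rfl⟩ := Multiset.mem_replicate.mp hi
    rw [← card_compl] at hne
    obtain ⟨x, hx⟩ := card_ne_zero.mp hne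
    exact ⟨x, orbitCard_of_notMem_support (mem_compl.mp hx)⟩

theorem two_le_orbitCard_iff : 2 ≤ σ.orbitCard x ↔ x ∈ σ.support := by
  by_cases hx : x ∈ σ.support
  · simp only [hx, iff_true, orbitCard_of_mem_support hx]
    exact two_le_card_support_cycleOf_iff.mpr (mem_support.mp hx)
  · simp [hx, orbitCard_of_notMem_support hx]

theorem sameCycle_of_orbitCard_eq (hσ : σ.partition.parts.Nodup)
    (h : σ.orbitCard x = σ.orbitCard y) : σ.SameCycle x y := by
  rw [parts_partition] at hσ
  by_cases hx : x ∈ σ.support <;> by_cases hy : y ∈ σ.support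
  · have hnd := Multiset.nodup_of_le (Multiset.le_add_right _ _) hσ
    rw [cycleType_def] at hnd
    rw [orbitCard_of_mem_support hx, orbitCard_of_mem_support hy] at h
    refine (sameCycle_iff_cycleOf_eq_of_mem_support hx hy).mpr ?_
    exact Multiset.inj_on_of_nodup_map hnd _ (cycleOf_mem_cycleFactorsFinset_iff.mpr hx) _
      (cycleOf_mem_cycleFactorsFinset_iff.mpr hy) h
  · exact absurd (h ▸ two_le_orbitCard_iff.mpr hx) (two_le_orbitCard_iff.not.mpr hy)
  · exact absurd (h ▸ two_le_orbitCard_iff.mpr hy) (two_le_orbitCard_iff.not.mpr hx)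
  · have hnd := Multiset.nodup_of_le (Multiset.le_add_left _ _) hσ
    rw [Multiset.nodup_iff_count_le_one] at hnd
    have hfix : #σ.supportᶜ ≤ 1 := by
      simpa only [card_compl, Multiset.count_replicate_self] using hnd 1
    rw [card_le_one.mp hfix x (mem_compl.mpr hx) y (mem_compl.mpr hy)]

theorem SameCycle.mem_of_image_eq_self {S : Finset α} (hS : S.image σ = S)
    (h : σ.SameCycle x y) (hx : x ∈ S) : y ∈ S := by
  obtain ⟨i, -, rfl⟩ := h.exists_pow_eq'
  clear h
  induction i with
  | zero => simpa using hx
  | succ i ih => rw [pow_succ', mul_apply, ← hS]; exact mem_image_of_mem σ ih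

theorem image_filter_orbitCard_mem (A : Finset ℕ) :
    (univ.filter fun x => σ.orbitCard x ∈ A).image σ =
      univ.filter fun x => σ.orbitCard x ∈ A := by
  ext y
  simp only [mem_image, mem_filter, mem_univ, true_and]
  refine ⟨fun ⟨x, hx, hxy⟩ => hxy ▸ (σ.orbitCard_apply x).symm ▸ hx, fun hy => ?_⟩
  exact ⟨σ.symm y, by rwa [← orbitCard_apply, apply_symm_apply], apply_symm_apply σ y⟩

theorem image_orbitCard_filter_mem {A : Finset ℕ} (hA : A ⊆ σ.partition.parts.toFinset) :
    (univ.filter fun x => σ.orbitCard x ∈ A).image σ.orbitCard = A := by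
  ext i
  simp only [mem_image, mem_filter, mem_univ, true_and]
  refine ⟨fun ⟨x, hx, hxi⟩ => hxi ▸ hx, fun hi => ?_⟩
  obtain ⟨x, rfl⟩ := exists_orbitCard_eq (Multiset.mem_toFinset.mp (hA hi))
  exact ⟨x, hi, rfl⟩

theorem filter_orbitCard_eq_of_image_eq_self (hσ : σ.partition.parts.Nodup) {S : Finset α}
    (hS : S.image σ = S) (hx : x ∈ S) :
    S.filter (fun y => σ.orbitCard y = σ.orbitCard x) = univ.filter fun y => σ.SameCycle x y := by
  ext y
  simp only [mem_filter, mem_univ, true_and]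
  exact ⟨fun h => sameCycle_of_orbitCard_eq hσ h.2.symm,
    fun h => ⟨h.mem_of_image_eq_self hS hx, h.orbitCard_eq.symm⟩⟩

theorem card_eq_sum_image_orbitCard (hσ : σ.partition.parts.Nodup) {S : Finset α}
    (hS : S.image σ = S) :
    #S = ∑ i ∈ S.image σ.orbitCard, i := by
  rw [card_eq_sum_card_image σ.orbitCard S]
  refine sum_congr rfl fun i hi => ?_
  obtain ⟨x, hx, rfl⟩ := mem_image.mp hi
  rw [filter_orbitCard_eq_of_image_eq_self hσ hS hx]
  rfl

theorem eq_filter_orbitCard_mem_image (hσ : σ.partition.parts.Nodup) {S : Finset α}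
    (hS : S.image σ = S) :
    univ.filter (fun x => σ.orbitCard x ∈ S.image σ.orbitCard) = S := by
  ext x
  simp only [mem_filter, mem_univ, true_and, mem_image]
  refine ⟨fun ⟨y, hy, hyx⟩ => ?_, fun hx => ⟨x, hx, rfl⟩⟩
  exact (sameCycle_of_orbitCard_eq hσ hyx).mem_of_image_eq_self hS hy

theorem card_invariant_finsets_eq_card_subsets_parts (hσ : σ.partition.parts.Nodup) (m : ℕ) :
    #(univ.filter fun S : Finset α => #S = m ∧ S.image σ = S) =
      #(σ.partition.parts.toFinset.powerset.filter fun A => ∑ i ∈ A, i = m) := by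
  refine card_nbij' (fun S => S.image σ.orbitCard) (fun A => univ.filter (σ.orbitCard · ∈ A))
    ?_ ?_ ?_ ?_
  · rintro S hS
    rw [mem_coe, mem_filter_univ] at hS
    rw [mem_coe, mem_filter, mem_powerset]
    refine ⟨fun i hi => ?_, by rw [← card_eq_sum_image_orbitCard hσ hS.2, hS.1]⟩
    obtain ⟨x, -, rfl⟩ := mem_image.mp hi
    exact Multiset.mem_toFinset.mpr (orbitCard_mem_parts_partition σ x)
  · rintro A hA
    rw [mem_coe, mem_filter, mem_powerset] at hA
    rw [mem_coe, mem_filter_univ]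
    refine ⟨?_, image_filter_orbitCard_mem A⟩
    rw [card_eq_sum_image_orbitCard hσ (image_filter_orbitCard_mem A),
      image_orbitCard_filter_mem hA.1, hA.2]
  · rintro S hS
    rw [mem_coe, mem_filter_univ] at hS
    exact eq_filter_orbitCard_mem_image hσ hS.2
  · rintro A hA
    rw [mem_coe, mem_filter, mem_powerset] at hA
    exact image_orbitCard_filter_mem hA.1

end Equiv.Perm

theorem dd_eq_card_filter_powerset (k m : ℕ) :
    dd k m = #((Icc 1 k).powerset.filter fun A => ∑ i ∈ A, i = m) := by
  rw [dd, ← Fintype.card_coe]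
  refine Fintype.card_congr
    { toFun := fun p => ⟨p.1.parts.toFinset, ?_⟩
      invFun := fun A => ⟨⟨A.1.val, fun hi => ?_, ?_⟩, A.1.nodup, fun i hi => ?_⟩
      left_inv := fun p => Subtype.ext (Nat.Partition.ext (Multiset.dedup_eq_self.mpr p.2.1))
      right_inv := fun A => Subtype.ext (val_toFinset A.1) }
  · obtain ⟨p, hnd, hle⟩ := p
    rw [mem_filter, mem_powerset, sum_eq_multiset_sum, Multiset.toFinset_val,
      Multiset.dedup_eq_self.mpr hnd, Multiset.map_id']
    exact ⟨fun i hi => mem_Icc.mpr ⟨p.parts_pos (Multiset.mem_toFinset.mp hi),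
      hle i (Multiset.mem_toFinset.mp hi)⟩, p.parts_sum⟩
  · exact (mem_Icc.mp (mem_powerset.mp (mem_filter.mp A.2).1 hi)).1
  · exact (sum_val A.1).trans (mem_filter.mp A.2).2
  · exact (mem_Icc.mp (mem_powerset.mp (mem_filter.mp A.2).1 hi)).2

theorem saxl_stmt10_general (k n : ℕ) (j : ℕ)
    (σ : Equiv.Perm (Fin n)) (hσ : σ.partition.parts = (Finset.Icc 1 k).val) :
    (invCount σ j : ℤ) - (invCount σ (j - 1) : ℤ)
      = (dd k j : ℤ) - (dd k (j - 1) : ℤ) := by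
  have invCount_eq_dd (m : ℕ) : invCount σ m = dd k m := by
    have h := σ.card_invariant_finsets_eq_card_subsets_parts (hσ ▸ (Icc 1 k).nodup) m
    rw [hσ, val_toFinset] at h
    rw [dd_eq_card_filter_powerset]
    exact h
  rw [invCount_eq_dd j, invCount_eq_dd (j - 1)]

/-- For `n = k(k+1)/2` and `σ` of cycle type the staircase `ρ_k = (k,…,2,1)`,
the value `[n-j,j](ρ_k) = ([n-j]∘[j])(σ) - ([n-j+1]∘[j-1])(σ)` of the irreducible
character to the 2-part partition `(n-j,j)` equals `d_k(j) - d_k(j-1)`. -/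
theorem saxl_stmt10 (k n : ℕ) (hk : 1 ≤ k) (hn : n = k * (k + 1) / 2)
    (j : ℕ) (hj1 : 1 ≤ j) (hj2 : 2 * j ≤ n)
    (σ : Equiv.Perm (Fin n)) (hσ : σ.partition.parts = (Finset.Icc 1 k).val) :
    (invCount σ j : ℤ) - (invCount σ (j - 1) : ℤ)
      = (dd k j : ℤ) - (dd k (j - 1) : ℤ) :=
  saxl_stmt10_general k n j σ hσ
end
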